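/- arXiv:2303.15694 — 4 statements merged into one kernel-verified Lean document; each statement's English description precedes it below -/
import Mathlib

section
/- Fix coprime positive integers m, n and r ≥ 1. For an (m,n)-parking function (D, φ), define γ_i := γ(φ^{-1}(i)) for i = 1,...,m, where γ(x,y) = mn - mx - ny is evaluated at the top endpoint of the vertical step. Then the set of rank r semistandard parking functions (D, Υ) standardizing to (D, φ) is in bijection with weakly increasing sequences 1 ≤ a_1 ≤ a_2 ≤ ... ≤ a_m ≤ r such that a_i < a_{i+1} whenever γ_{i+1} < γ_i; the bijection sends (D, Υ) to the sequence a_i = Υ(φ^{-1}(i)). -/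
/-- Row-sum (Dyck) condition for a path encoded by columns of south steps. -/
def RowOK (m n : ℕ) (g : Fin n → ℕ) : Prop :=
  ∀ k : ℕ, k ≤ n →
    m * k ≤ n * ∑ i ∈ Finset.univ.filter (fun i : Fin n => i.val < k), g i

/-- The `x`-coordinate of the `(t+1)`-st south step (counted from the top) of
the Dyck path with column data `a`. -/
def xcoord (n : ℕ) (a : Fin n → ℕ) (t : ℕ) : ℕ :=
  (Finset.univ.filter (fun i : Fin n =>
    (∑ j ∈ Finset.univ.filter (fun j : Fin n => j ≤ i), a j) ≤ t)).card

/-- The Anderson label `γ = m*n - m*x - n*y` of the `(t+1)`-st south step from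
the top, whose top endpoint is `(xcoord n a t, m - t)`. -/
def gam (m n : ℕ) (a : Fin n → ℕ) (t : Fin m) : ℤ :=
  (m : ℤ) * n - m * xcoord n a t.val - n * ((m : ℤ) - t.val)

/-- Injectivity of the Anderson labels when `gcd(m,n)=1`. -/
lemma gam_injective (m n : ℕ) (hmn : Nat.Coprime m n) (a : Fin n → ℕ)
    (t u : Fin m) (h : gam m n a t = gam m n a u) : t = u := by
  unfold gam at h
  have hdvd : (m:ℤ) ∣ (n:ℤ) * ((t.val:ℤ) - u.val) :=
    ⟨(xcoord n a t.val : ℤ) - xcoord n a u.val, by linear_combination h⟩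
  have hcop : IsCoprime (m:ℤ) (n:ℤ) := Int.isCoprime_iff_gcd_eq_one.mpr (by
    simpa [Int.gcd] using hmn)
  have hdvd2 : (m:ℤ) ∣ ((t.val:ℤ) - u.val) := hcop.dvd_of_dvd_mul_left hdvd
  have h0 : ((t.val:ℤ) - u.val) = 0 := by
    refine Int.eq_zero_of_abs_lt_dvd hdvd2 ?_
    have := t.isLt; have := u.isLt
    rw [abs_lt]; constructor <;> [push_cast; push_cast] <;> omega
  exact Fin.ext (by omega)

/-- Fibers of standardization.  Fix an `(m,n)`-parking function `(D, φ)` with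
inverse `ψ`, and set `γ_i := γ(φ⁻¹ i) = gam (ψ i)`.  The map `Υ ↦ Υ ∘ ψ`
(recording `a_i = Υ(φ⁻¹ i)`) is a bijection from the set of rank `r`
semistandard parking functions on `D` standardizing to `(D, φ)` onto the set
of weakly increasing sequences `a_1 ≤ ⋯ ≤ a_m` with values in `{1,…,r}` such
that `a_i < a_{i+1}` whenever `γ_{i+1} < γ_i`. -/
theorem std_fiber_bijection (m n r : ℕ) (hm : 0 < m) (hn : 0 < n) (hr : 0 < r)
    (hmn : Nat.Coprime m n)
    (a : Fin n → ℕ) (hsum : (∑ i, a i) = m) (hdyck : RowOK m n a)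
    (φ ψ : Fin m → Fin m) (hinv : ∀ t, ψ (φ t) = t ∧ φ (ψ t) = t)
    (hpark : ∀ t u : Fin m, t.val + 1 = u.val →
      xcoord n a t.val = xcoord n a u.val → φ t < φ u) :
    Set.BijOn (fun (Υ : Fin m → Fin r) => Υ ∘ ψ)
      {Υ : Fin m → Fin r |
        (∀ t u : Fin m, t.val + 1 = u.val →
          xcoord n a t.val = xcoord n a u.val → Υ t ≤ Υ u) ∧
        (∀ t u : Fin m, φ t < φ u ↔
          (Υ t < Υ u ∨ (Υ t = Υ u ∧ gam m n a t < gam m n a u)))}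
      {b : Fin m → Fin r | Monotone b ∧
        ∀ i u : Fin m, i.val + 1 = u.val →
          gam m n a (ψ u) < gam m n a (ψ i) → b i < b u} := by
  have hginj := gam_injective m n hmn a
  have hψinj : Function.Injective ψ := fun x y h => by
    have := congrArg φ h; rwa [(hinv x).2, (hinv y).2] at this
  refine ⟨?_, ?_, ?_⟩
  · -- MapsTo
    rintro Υ ⟨h1, h2⟩
    constructor
    · intro i j hij
      rcases eq_or_lt_of_le hij with h | h
      · exact le_of_eq (congrArg (Υ ∘ ψ) h)
      · have hφ : φ (ψ i) < φ (ψ j) := by rw [(hinv i).2, (hinv j).2]; exact h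
        rcases (h2 (ψ i) (ψ j)).mp hφ with h' | ⟨h', _⟩
        · exact le_of_lt h'
        · exact le_of_eq h'
    · intro i u hiu hg
      have hφ : φ (ψ i) < φ (ψ u) := by
        rw [(hinv i).2, (hinv u).2]; exact Fin.lt_def.mpr (by omega)
      rcases (h2 (ψ i) (ψ u)).mp hφ with h' | ⟨_, h'⟩
      · exact h'
      · exact absurd h' (not_lt.mpr (le_of_lt hg))
  · -- InjOn
    intro Υ1 _ Υ2 _ h
    funext t
    have := congrFun h (φ t)
    simpa [(hinv t).1] using this
  · -- SurjOn
    rintro b ⟨hb1, hb2⟩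
    -- chain lemma
    have key : ∀ k : ℕ, ∀ i j : Fin m, j.val = i.val + k → b i = b j →
        gam m n a (ψ i) ≤ gam m n a (ψ j) := by
      intro k
      induction k with
      | zero => intro i j hj _; have : i = j := Fin.ext (by omega); rw [this]
      | succ k ih =>
        intro i j hj hb
        have hjm : i.val + k < m := by omega
        set j' : Fin m := ⟨i.val + k, hjm⟩ with hj'
        have h1 : b i ≤ b j' := hb1 (by simp [Fin.le_def, hj'])
        have h2 : b j' ≤ b j := hb1 (Fin.le_def.mpr (by simp [hj']; omega))
        have hbij' : b i = b j' := le_antisymm h1 (hb ▸ h2)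
        have hle := ih i j' rfl hbij'
        have hnot : ¬ gam m n a (ψ j) < gam m n a (ψ j') := by
          intro hlt
          have := hb2 j' j (by simp [hj']; omega) hlt
          rw [← hbij', hb] at this
          exact lt_irrefl _ this
        exact le_trans hle (le_of_not_gt hnot)
    have strict : ∀ i j : Fin m, i < j → b i = b j →
        gam m n a (ψ i) < gam m n a (ψ j) := by
      intro i j hij hb
      have hk : j.val = i.val + (j.val - i.val) := by
        have := Fin.lt_def.mp hij; omega
      have hle := key (j.val - i.val) i j hk hb
      rcases lt_or_eq_of_le hle with h | h
      · exact h
      · exact absurd (hψinj (hginj _ _ h)) (Fin.ne_of_lt hij)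
    refine ⟨b ∘ φ, ⟨?_, ?_⟩, ?_⟩
    · intro t u htu hx
      exact hb1 (le_of_lt (hpark t u htu hx))
    · intro t u
      constructor
      · intro hφ
        rcases lt_or_eq_of_le (hb1 (le_of_lt hφ)) with h | h
        · exact Or.inl h
        · refine Or.inr ⟨h, ?_⟩
          have := strict (φ t) (φ u) hφ h
          rwa [(hinv t).1, (hinv u).1] at this
      · intro h
        rcases lt_trichotomy (φ t) (φ u) with hφ | hφ | hφ
        · exact hφ
        · have htu : t = u := by
            have := congrArg ψ hφ; rwa [(hinv t).1, (hinv u).1] at this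
          subst htu
          rcases h with h | ⟨_, h⟩ <;> exact absurd h (lt_irrefl _)
        · exfalso
          have hle : b (φ u) ≤ b (φ t) := hb1 (le_of_lt hφ)
          rcases h with h | ⟨heq, hg⟩
          · exact absurd h (not_lt.mpr hle)
          · have := strict (φ u) (φ t) hφ heq.symm
            rw [(hinv t).1, (hinv u).1] at this
            exact absurd hg (not_lt.mpr (le_of_lt this))
    · funext x
      show b (φ (ψ x)) = b x
      rw [(hinv x).2]
end

section
/- For coprime positive integers m and n, every orbit of the cyclic shift action of Z/nZ on the set of nonnegative integer n×r arrays with total sum m contains exactly one array (a_{ij}) whose associated lattice path is an (m,n)-Dyck path, i.e., for which t_k(a) = mk/n - Σ_{i=1}^k a_i ≤ 0 for all k = 1,...,n (equivalently, n is a maximum of a). -/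
open Finset

namespace DyckAux

variable {m n : ℕ}

/-- Periodic extension of `g`. -/
def G (hn : 0 < n) (g : Fin n → ℕ) (i : ℕ) : ℕ := g ⟨i % n, Nat.mod_lt _ hn⟩

/-- Partial sums of the periodic extension. -/
def S (hn : 0 < n) (g : Fin n → ℕ) (t : ℕ) : ℕ := ∑ i ∈ Finset.range t, G hn g i

/-- `f t = n · S t − m · t`. -/
def fI (m : ℕ) (hn : 0 < n) (g : Fin n → ℕ) (t : ℕ) : ℤ :=
  (n : ℤ) * S hn g t - (m : ℤ) * t

lemma periodSum (hn : 0 < n) (g : Fin n → ℕ) (t : ℕ) :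
    ∑ i ∈ Finset.range n, G hn g (t + i) = ∑ i, g i := by
  haveI : NeZero n := ⟨hn.ne'⟩
  set c : Fin n := ⟨t % n, Nat.mod_lt _ hn⟩ with hc
  have h1 : ∀ i : Fin n, G hn g (t + i.val) = g (c + i) := by
    intro i
    unfold G
    congr 1
    apply Fin.ext
    simp [hc, Fin.add_def, Nat.add_mod]
  calc ∑ i ∈ Finset.range n, G hn g (t + i)
      = ∑ i : Fin n, G hn g (t + i.val) := (Fin.sum_univ_eq_sum_range (fun i => G hn g (t + i)) n).symm
    _ = ∑ i : Fin n, g (c + i) := by exact Finset.sum_congr rfl (fun i _ => h1 i)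
    _ = ∑ i, g i := Equiv.sum_comp (Equiv.addLeft c) g

lemma S_add (hn : 0 < n) (g : Fin n → ℕ) (t u : ℕ) :
    S hn g (t + u) = S hn g t + ∑ i ∈ Finset.range u, G hn g (t + i) :=
  Finset.sum_range_add (G hn g) t u

lemma S_period (hn : 0 < n) (g : Fin n → ℕ) (hg : ∑ i, g i = m) (t : ℕ) :
    S hn g (t + n) = S hn g t + m := by
  rw [S_add, periodSum hn g t, hg]

lemma fI_period (hn : 0 < n) (g : Fin n → ℕ) (hg : ∑ i, g i = m) (t : ℕ) :
    fI m hn g (t + n) = fI m hn g t := by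
  unfold fI
  rw [S_period hn g hg t]
  push_cast
  ring

lemma fI_mod (hn : 0 < n) (g : Fin n → ℕ) (hg : ∑ i, g i = m) (t : ℕ) :
    fI m hn g t = fI m hn g (t % n) := by
  have key : ∀ q u, fI m hn g (u + q * n) = fI m hn g u := by
    intro q
    induction q with
    | zero => simp
    | succ q ih =>
        intro u
        have : u + (q + 1) * n = (u + q * n) + n := by ring
        rw [this, fI_period hn g hg, ih]
  conv_lhs => rw [← Nat.mod_add_div' t n]
  rw [key]

/-- Bridge between the `Fin`-filter sum and the periodic partial sums. -/
lemma bridge (hn : 0 < n) (g : Fin n → ℕ) (κ : Fin n) (k' : ℕ) (hk' : k' ≤ n) :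
    ∑ i ∈ Finset.univ.filter (fun i : Fin n => i.val < k'), g (i + κ)
      = ∑ j ∈ Finset.range k', G hn g (κ.val + j) := by
  rw [Finset.sum_filter]
  have h1 : ∑ i : Fin n, (if i.val < k' then g (i + κ) else 0)
      = ∑ j ∈ Finset.range n, (if j < k' then G hn g (κ.val + j) else 0) := by
    rw [← Fin.sum_univ_eq_sum_range (fun j => if j < k' then G hn g (κ.val + j) else 0) n]
    refine Finset.sum_congr rfl (fun i _ => ?_)
    by_cases h : i.val < k' <;> simp only [h, if_true, if_false]
    unfold G
    congr 1
    apply Fin.ext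
    simp [Fin.add_def, Nat.add_comm]
  rw [h1]
  rw [← Finset.sum_subset (Finset.range_subset_range.2 hk')
      (fun x _ hx => by simp [Finset.mem_range, Nat.not_lt] at hx ⊢; omega)]
  exact Finset.sum_congr rfl (fun j hj => by simp [Finset.mem_range.1 hj])

/-- `RowOK` of the shift by `κ` says exactly that `f κ` is minimal on `[κ, κ+n]`. -/
lemma rowOK_iff (hn : 0 < n) (g : Fin n → ℕ) (κ : Fin n) :
    RowOK m n (fun i => g (i + κ)) ↔
      ∀ k' : ℕ, k' ≤ n → fI m hn g κ.val ≤ fI m hn g (κ.val + k') := by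
  unfold RowOK
  apply forall_congr'
  intro k'
  apply imp_congr_right
  intro hk'
  rw [bridge hn g κ k' hk']
  unfold fI
  rw [S_add, ← Nat.cast_le (α := ℤ)]
  push_cast
  constructor <;> intro h <;> linarith

/-- From `RowOK` of the shift, `f κ` is a minimum over a full period. -/
lemma global_min (hn : 0 < n) (g : Fin n → ℕ) (hg : ∑ i, g i = m) (κ : Fin n)
    (h : RowOK m n (fun i => g (i + κ))) :
    ∀ t : ℕ, t < n → fI m hn g κ.val ≤ fI m hn g t := by
  intro t ht
  rw [rowOK_iff hn g κ] at h
  by_cases hcase : κ.val ≤ t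
  · have := h (t - κ.val) (by omega)
    rwa [show κ.val + (t - κ.val) = t from by omega] at this
  · have := h (t + n - κ.val) (by omega)
    rwa [show κ.val + (t + n - κ.val) = t + n from by omega,
      fI_period hn g hg] at this

/-- key uniqueness: two shifts both satisfying `RowOK` must be equal. -/
lemma shift_unique (hn : 0 < n) (hmn : Nat.Coprime m n) (g : Fin n → ℕ)
    (hg : ∑ i, g i = m) (κ1 κ2 : Fin n)
    (h1 : RowOK m n (fun i => g (i + κ1))) (h2 : RowOK m n (fun i => g (i + κ2))) :
    κ1 = κ2 := by
  have e1 := global_min hn g hg κ1 h1 κ2.val κ2.isLt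
  have e2 := global_min hn g hg κ2 h2 κ1.val κ1.isLt
  have heq : fI m hn g κ1.val = fI m hn g κ2.val := le_antisymm e1 e2
  unfold fI at heq
  have hdvd : (n : ℤ) ∣ (m : ℤ) * ((κ1.val : ℤ) - (κ2.val : ℤ)) := by
    refine ⟨(S hn g κ1.val : ℤ) - (S hn g κ2.val : ℤ), ?_⟩
    linarith
  have hcop : IsCoprime (n : ℤ) (m : ℤ) := by
    exact_mod_cast (Nat.isCoprime_iff_coprime.2 hmn.symm)
  have hdvd2 : (n : ℤ) ∣ ((κ1.val : ℤ) - (κ2.val : ℤ)) := hcop.dvd_of_dvd_mul_left hdvd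
  have habs : |(κ1.val : ℤ) - (κ2.val : ℤ)| < n := by
    rw [abs_lt]
    constructor <;> [have := κ2.isLt; have := κ1.isLt] <;> omega
  have := Int.eq_zero_of_abs_lt_dvd hdvd2 habs
  apply Fin.ext
  omega

end DyckAux

open DyckAux in
/-- For `gcd(m,n) = 1`, every orbit of the cyclic shift action of `ℤ/nℤ` on
nonnegative integer `n × r` arrays with total sum `m` contains exactly one
array whose associated lattice path is an `(m,n)`-Dyck path. -/
theorem unique_dyck_in_orbit (m n r : ℕ) (hm : 0 < m) (hn : 0 < n) (hr : 0 < r)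
    (hmn : Nat.Coprime m n) :
    ∀ a : Fin n → Fin r → ℕ, (∑ i, ∑ j, a i j) = m →
      ∃! b : Fin n → Fin r → ℕ,
        (∃ k : Fin n, ∀ i j, b i j = a (i + k) j) ∧
        (∑ i, ∑ j, b i j) = m ∧
        RowOK m n (fun i => ∑ j, b i j) := by
  intro a ha
  haveI : NeZero n := ⟨hn.ne'⟩
  set g : Fin n → ℕ := fun i => ∑ j, a i j with hgdef
  have hg : ∑ i, g i = m := ha
  -- choose a minimizer of fI on range n
  obtain ⟨k0, hk0mem, hk0min⟩ :=
    Finset.exists_min_image (Finset.range n) (fI m hn g) ⟨0, Finset.mem_range.2 hn⟩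
  set κ0 : Fin n := ⟨k0, Finset.mem_range.1 hk0mem⟩ with hκ0
  have hglobal : ∀ t : ℕ, fI m hn g κ0.val ≤ fI m hn g t := by
    intro t
    rw [fI_mod hn g hg t]
    exact hk0min _ (Finset.mem_range.2 (Nat.mod_lt _ hn))
  have hsumshift : ∀ κ : Fin n, ∑ i, g (i + κ) = m := by
    intro κ
    exact (Equiv.sum_comp (Equiv.addRight κ) g).trans hg
  refine ⟨fun i j => a (i + κ0) j, ⟨⟨κ0, fun i j => rfl⟩, ?_, ?_⟩, ?_⟩
  · exact hsumshift κ0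
  · have : (fun i : Fin n => ∑ j, a (i + κ0) j) = fun i => g (i + κ0) := rfl
    rw [this, rowOK_iff hn g κ0]
    intro k' _
    exact hglobal _
  · rintro b' ⟨⟨k', hb'⟩, hsum', hrow'⟩
    have hrow'' : RowOK m n (fun i => g (i + k')) := by
      have : (fun i : Fin n => ∑ j, b' i j) = fun i => g (i + k') := by
        funext i
        simp only [hgdef]
        exact Finset.sum_congr rfl (fun j _ => hb' i j)
      rwa [this] at hrow'
    have hrow0 : RowOK m n (fun i => g (i + κ0)) := by
      rw [rowOK_iff hn g κ0]
      intro k' _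
      exact hglobal _
    have hkeq : k' = κ0 := shift_unique hn hmn g hg k' κ0 hrow'' hrow0
    funext i j
    rw [hb' i j, hkeq]
end

section
/- Let (D, Υ) be a rank r semistandard (m,n)-parking function of weight w, f := A_w(D, Υ) its associated n-stable affine composition, and std(D, Υ) its standardization with associated n-stable affine permutation σ (so f = f_w ∘ σ with σ of minimal length). Then the number of pairs (i,j) ∈ {1,...,m} × {1,...,n} with f(i+j) < f(i) equals the number of pairs (i,j) ∈ {1,...,m} × {1,...,n} with σ(i+j) < σ(i); in particular codinv(D, Υ) can be computed directly from f. -/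
/-- An affine permutation of period `m`: a bijection `σ : ℤ → ℤ` with
`σ(x+m) = σ(x)+m` and `σ(1)+⋯+σ(m) = m(m+1)/2`. -/
def IsAffinePerm (m : ℕ) (σ : ℤ → ℤ) : Prop :=
  Function.Bijective σ ∧ (∀ x : ℤ, σ (x + m) = σ x + m) ∧
    2 * (∑ x ∈ Finset.Icc (1 : ℤ) m, σ x) = m * (m + 1)

/-- Let `w` be a composition of `m` with `r` parts, `fw` the nondecreasing
weight-`w` step function, and `σ` an `n`-stable affine permutation which is a
minimal-length coset representative for `S_w` (so `f := fw ∘ σ` is the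
`n`-stable affine composition of weight `w` associated to a semistandard
parking function whose standardization corresponds to `σ`).  Then the number
of pairs `(i,j) ∈ [1,m] × [1,n]` with `f(i+j) < f(i)` equals the number of
such pairs with `σ(i+j) < σ(i)`; in particular `codinv` can be computed
directly from `f`. -/
theorem codinv_from_affine_composition (m n r : ℕ)
    (hm : 0 < m) (hn : 0 < n) (hr : 0 < r) (hmn : Nat.Coprime m n)
    (w : Fin r → ℕ) (hw : (∑ i, w i) = m)
    (fw : ℤ → ℤ)
    (hfw_per : ∀ x : ℤ, fw (x + m) = fw x + r)
    (hfw_val : ∀ i : Fin r, ∀ x : ℤ,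
      (∑ j ∈ Finset.univ.filter (fun j : Fin r => j.val < i.val), (w j : ℤ)) < x →
      x ≤ (∑ j ∈ Finset.univ.filter (fun j : Fin r => j.val ≤ i.val), (w j : ℤ)) →
      fw x = i.val + 1)
    (σ : ℤ → ℤ) (hσ : IsAffinePerm m σ)
    (hmin : ∀ s t : ℤ, fw (σ s) = fw (σ t) → σ s < σ t → s < t)
    (hstab : ∀ x : ℤ, σ x < σ (x + n)) :
    ((Finset.Icc (1 : ℤ) m ×ˢ Finset.Icc (1 : ℤ) n).filter
        (fun p => fw (σ (p.1 + p.2)) < fw (σ p.1))).card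
      = ((Finset.Icc (1 : ℤ) m ×ˢ Finset.Icc (1 : ℤ) n).filter
          (fun p => σ (p.1 + p.2) < σ p.1)).card := by
    classical
  -- partial sums of w
  set S : ℕ → ℤ := fun k => ∑ j ∈ Finset.univ.filter (fun j : Fin r => j.val < k), (w j : ℤ)
    with hSdef
  have hS0 : S 0 = 0 := by simp [hSdef]
  have hSr : S r = m := by
    have : Finset.univ.filter (fun j : Fin r => j.val < r) = Finset.univ := by
      apply Finset.filter_true_of_mem; intro j _; exact j.isLt
    simp only [hSdef, this]
    rw [← hw]; push_cast; ring
  have hSmono : ∀ a b : ℕ, a ≤ b → S a ≤ S b := by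
    intro a b hab
    apply Finset.sum_le_sum_of_subset_of_nonneg
    · intro j hj; simp only [Finset.mem_filter, Finset.mem_univ, true_and] at hj ⊢; omega
    · intro j _ _; positivity
  have hSeq : ∀ k : ℕ, S (k + 1)
      = ∑ j ∈ Finset.univ.filter (fun j : Fin r => j.val ≤ k), (w j : ℤ) := by
    intro k
    apply Finset.sum_congr _ (fun _ _ => rfl)
    ext j; simp [Nat.lt_succ_iff]
  -- value of fw on [1, m]
  have hval : ∀ x : ℤ, 1 ≤ x → x ≤ (m : ℤ) →
      ∃ k : ℕ, k < r ∧ S k < x ∧ x ≤ S (k + 1) ∧ fw x = (k : ℤ) + 1 := by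
    intro x hx1 hxm
    have hex : ∃ k : ℕ, x ≤ S k := ⟨r, by rw [hSr]; exact hxm⟩
    set k0 := Nat.find hex with hk0
    have hk0r : k0 ≤ r := Nat.find_le (by rw [hSr]; exact hxm)
    have hk0pos : 0 < k0 := by
      by_contra hc
      have hsp : x ≤ S k0 := Nat.find_spec hex
      have hz : k0 = 0 := by omega
      rw [hz, hS0] at hsp
      omega
    refine ⟨k0 - 1, by omega, ?_, ?_, ?_⟩
    · have := Nat.find_min hex (m := k0 - 1) (by omega)
      omega
    · have h1 : k0 - 1 + 1 = k0 := by omega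
      rw [h1]; exact Nat.find_spec hex
    · have h1 : k0 - 1 + 1 = k0 := by omega
      have hlt : S (k0 - 1) < x := by
        have := Nat.find_min hex (m := k0 - 1) (by omega); omega
      have hle : x ≤ S (k0 - 1 + 1) := by rw [h1]; exact Nat.find_spec hex
      have := hfw_val ⟨k0 - 1, by omega⟩ x hlt (by rw [← hSeq]; exact hle)
      simpa using this
  -- iterated periodicity
  have hper : ∀ k : ℤ, ∀ x : ℤ, fw (x + k * m) = fw x + k * r := by
    intro k
    induction k using Int.induction_on with
    | zero => simp
    | succ i ih =>
      intro x
      have h1 : x + ((i : ℤ) + 1) * m = (x + i * m) + m := by ring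
      rw [h1, hfw_per, ih]; ring
    | pred i ih =>
      intro x
      have h1 : (x + (-(i : ℤ) - 1) * m) + m = x + (-(i : ℤ)) * m := by ring
      have h2 := hfw_per (x + (-(i : ℤ) - 1) * m)
      rw [h1, ih] at h2
      linarith
  -- fw is monotone: single step
  have hstep : ∀ x : ℤ, fw x ≤ fw (x + 1) := by
    intro x
    set q := (x - 1) / (m : ℤ) with hq
    set s := (x - 1) % (m : ℤ) with hs
    have hm0 : (m : ℤ) ≠ 0 := by exact_mod_cast hm.ne'
    have hdm : (m : ℤ) * q + s = x - 1 := Int.mul_ediv_add_emod (x - 1) m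
    have hs0 : 0 ≤ s := Int.emod_nonneg _ hm0
    have hsm : s < m := Int.emod_lt_of_pos _ (by exact_mod_cast hm)
    have hx : x = (s + 1) + q * m := by linarith
    have hx1 : x + 1 = (s + 2) + q * m := by linarith
    have e1 : fw x = fw (s + 1) + q * r := by rw [hx, hper]
    have e2 : fw (x + 1) = fw (s + 2) + q * r := by
      rw [hx1, hper]
    rw [e1, e2]
    have key : fw (s + 1) ≤ fw (s + 2) := by
      rcases lt_or_eq_of_le (by omega : s + 1 ≤ (m : ℤ)) with h | h
      · obtain ⟨k, hkr, hk1, hk2, hk3⟩ := hval (s + 1) (by omega) (by omega)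
        obtain ⟨k', hkr', hk1', hk2', hk3'⟩ := hval (s + 2) (by omega) (by omega)
        have hkk : k ≤ k' := by
          by_contra hc
          have : S (k' + 1) ≤ S k := hSmono _ _ (by omega)
          omega
        rw [hk3, hk3']
        exact_mod_cast by omega
      · obtain ⟨k, hkr, hk1, hk2, hk3⟩ := hval (s + 1) (by omega) (le_of_eq h)
        obtain ⟨k', hkr', hk1', hk2', hk3'⟩ := hval 1 (le_refl 1) (by exact_mod_cast hm)
        have h2 : s + 2 = 1 + (m : ℤ) := by omega
        rw [h2, hfw_per, hk3, hk3']
        have : (k : ℤ) + 1 ≤ r := by exact_mod_cast hkr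
        have : (0 : ℤ) ≤ k' := Int.ofNat_nonneg k'
        omega
    omega
  have hmono : Monotone fw := monotone_int_of_le_succ hstep
  -- the two predicates agree on the relevant pairs
  congr 1
  apply Finset.filter_congr
  rintro ⟨i, j⟩ hp
  simp only [Finset.mem_product, Finset.mem_Icc] at hp
  obtain ⟨⟨hi1, hi2⟩, hj1, hj2⟩ := hp
  simp only [eq_iff_iff]
  constructor
  · intro h
    by_contra hc
    push_neg at hc
    exact absurd (hmono hc) (not_le_of_gt h)
  · intro h
    rcases lt_or_eq_of_le (hmono h.le) with h' | h'
    · exact h'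
    · exfalso
      have := hmin (i + j) i h' h
      omega
end

section
/- For a period-m affine permutation σ with no inversions of height n (σ(x) < σ(x+n) for all x, gcd(m,n)=1), the number of pairs (i,h) ∈ {1,...,m} × {1,...,n} with σ(i+h) < σ(i) is at most (m-1)(n-1)/2, and this count is invariant under replacing {1,...,m} by any set of m integers pairwise distinct modulo m. -/
namespace CodinvAux

variable {m n : ℕ} {σ : ℤ → ℤ}

lemma perm_int (hper : ∀ x : ℤ, σ (x + m) = σ x + m) :
    ∀ (k : ℤ) (x : ℤ), σ (x + k * m) = σ x + k * m := by
  intro k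
  induction k using Int.induction_on with
  | zero => simp
  | succ k ih =>
      intro x
      have h1 := hper (x + k * m)
      have h2 := ih x
      have : x + (k + 1 : ℤ) * m = (x + k * m) + m := by ring
      rw [this, h1, h2]; ring
  | pred k ih =>
      intro x
      have h1 := hper (x + (-k - 1 : ℤ) * m)
      have h2 := ih x
      have e : (x + (-k - 1 : ℤ) * m) + m = x + (-k : ℤ) * m := by ring
      rw [e] at h1
      have : σ (x + (-k - 1 : ℤ) * m) = σ (x + (-k : ℤ) * m) - m := by omega
      rw [this, h2]; push_cast; ring

lemma transfer (hper : ∀ x : ℤ, σ (x + m) = σ x + m)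
    (c x y : ℤ) (hd : (m : ℤ) ∣ x - y) :
    (σ (x + c) < σ x ↔ σ (y + c) < σ y) := by
  obtain ⟨k, hk⟩ := hd
  have hx : x = y + k * m := by rw [mul_comm] at hk; omega
  subst hx
  have h1 : σ (y + k * m + c) = σ (y + c) + k * m := by
    have := perm_int hper k (y + c)
    rw [show y + k * m + c = y + c + k * m by ring, this]
  have h2 := perm_int hper k y
  rw [h1, h2]
  omega

lemma descend (hm : 0 < m) (hper : ∀ x : ℤ, σ (x + m) = σ x + m)
    (d : ℤ) (hd : 1 ≤ d) (hdec : ∀ x : ℤ, σ (x + d) < σ x) : False := by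
  have chain : ∀ k : ℕ, σ ((0:ℤ) + k * d) + k ≤ σ 0 := by
    intro k
    induction k with
    | zero => simp
    | succ k ih =>
        have h1 := hdec ((0:ℤ) + k * d)
        have e : (0:ℤ) + k * d + d = 0 + (k + 1 : ℕ) * d := by push_cast; ring
        rw [e] at h1
        omega
  have h1 := chain m
  have h2 : σ ((0:ℤ) + (m:ℕ) * d) = σ 0 + d * m := by
    have := perm_int hper d 0
    rw [show ((0:ℤ) + (m:ℕ) * d) = (0:ℤ) + d * m by push_cast; ring, this]
  rw [h2] at h1
  have : (1:ℤ) * m ≤ d * m := by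
    apply mul_le_mul_of_nonneg_right hd; positivity
  omega


lemma exists_good (hm : 0 < m) (hmn : Nat.Coprime m n)
    (hinj : Function.Injective σ)
    (hper : ∀ x : ℤ, σ (x + m) = σ x + m)
    (hstab : ∀ x : ℤ, σ x < σ (x + n))
    (h : ℤ) (h1 : 1 ≤ h) (h2 : h < n) :
    ∃ j : ℤ, σ (j - h) < σ j ∧ σ j < σ (j + (n - h)) := by
  by_contra hcon
  push_neg at hcon
  have strict : ∀ a b : ℤ, a ≠ b → σ a ≤ σ b → σ a < σ b := by
    intro a b hab hle
    exact lt_of_le_of_ne hle (fun e => hab (hinj e))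
  have hcon' : ∀ j : ℤ, σ (j - h) < σ j → σ (j + (n - h)) < σ j := by
    intro j hj
    apply strict
    · intro e; omega
    · exact hcon j hj
  set Q : ℤ → Prop := fun j => σ (j - h) < σ j with hQdef
  by_cases hQ : ∃ j, Q j
  · obtain ⟨j, hQj⟩ := hQ
    have step : ∀ j : ℤ, Q j → Q (j + n) := by
      intro j hj
      have hP := hcon' j hj
      have hs := hstab j
      show σ (j + n - h) < σ (j + n)
      have e : j + (n:ℤ) - h = j + ((n:ℤ) - h) := by ring
      rw [e]
      exact lt_trans hP hs
    have QN : ∀ k : ℕ, Q (j + k * n) := by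
      intro k
      induction k with
      | zero => simpa using hQj
      | succ k ih =>
          have := step _ ih
          have e : j + (k:ℤ) * n + n = j + ((k:ℕ)+1 : ℕ) * n := by push_cast; ring
          rwa [e] at this
    have allQ : ∀ x : ℤ, Q x := by
      intro x
      obtain ⟨a, b, hab⟩ : ∃ a b : ℤ, a * m + b * n = 1 := by
        have hc : IsCoprime (m : ℤ) (n : ℤ) := by
          rw [Int.isCoprime_iff_gcd_eq_one]
          simpa using hmn
        obtain ⟨a, b, hab⟩ := hc
        exact ⟨a, b, hab⟩
      set k : ℤ := ((x - j) * b) % m with hk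
      have hk0 : 0 ≤ k := Int.emod_nonneg _ (by exact_mod_cast hm.ne')
      have hdvd : (m : ℤ) ∣ x - (j + k * n) := by
        refine ⟨(x - j) * a + ((x - j) * b / m) * n, ?_⟩
        have hq := Int.mul_ediv_add_emod ((x - j) * b) (m : ℤ)
        rw [hk]
        linear_combination (-(x - j)) * hab - (n : ℤ) * hq
      have hQjk : Q (j + k * n) := by
        have := QN k.toNat
        rwa [show ((k.toNat : ℤ)) = k from Int.toNat_of_nonneg hk0] at this
      show σ (x - h) < σ x
      rw [sub_eq_add_neg, transfer hper (-h) x (j + k * n) hdvd, ← sub_eq_add_neg]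
      exact hQjk
    have hdec : ∀ x : ℤ, σ (x + ((n:ℤ) - h)) < σ x := fun x => hcon' x (allQ x)
    exact descend hm hper ((n:ℤ) - h) (by omega) hdec
  · push_neg at hQ
    have hdec : ∀ x : ℤ, σ (x + h) < σ x := by
      intro x
      have := hQ (x + h)
      simp only [hQdef] at this
      have e : x + h - h = x := by ring
      rw [e] at this
      exact strict _ _ (by omega) (le_of_not_gt this)
    exact descend hm hper h h1 hdec

lemma red_mem (hm : 0 < m) (x : ℤ) : (x - 1) % m + 1 ∈ Finset.Icc (1:ℤ) m := by
  have h0 : (0:ℤ) < m := by exact_mod_cast hm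
  have h1 := Int.emod_nonneg (x - 1) h0.ne'
  have h2 := Int.emod_lt_of_pos (x - 1) h0
  rw [Finset.mem_Icc]
  omega

lemma red_dvd (x : ℤ) : (m : ℤ) ∣ x - ((x - 1) % m + 1) := by
  have h := Int.mul_ediv_add_emod (x - 1) m
  exact ⟨(x - 1) / m, by omega⟩

lemma mem_Icc_eq_of_dvd (hm : 0 < m) {x y : ℤ} (hx : x ∈ Finset.Icc (1:ℤ) m)
    (hy : y ∈ Finset.Icc (1:ℤ) m) (hd : (m : ℤ) ∣ x - y) : x = y := by
  rw [Finset.mem_Icc] at hx hy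
  have hm' : (0:ℤ) < m := by exact_mod_cast hm
  have h0 : x - y = 0 := Int.eq_zero_of_abs_lt_dvd hd (by rw [abs_lt]; omega)
  omega

lemma key (hm : 0 < m) (hmn : Nat.Coprime m n)
    (hinj : Function.Injective σ)
    (hper : ∀ x : ℤ, σ (x + m) = σ x + m)
    (hstab : ∀ x : ℤ, σ x < σ (x + n))
    (h : ℤ) (hh1 : 1 ≤ h) (hh2 : h < n) :
    ((Finset.Icc (1:ℤ) m).filter (fun i => σ (i + h) < σ i)).card
      + ((Finset.Icc (1:ℤ) m).filter (fun i => σ (i + ((n:ℤ) - h)) < σ i)).card + 1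
      ≤ m := by
  classical
  set W := Finset.Icc (1:ℤ) m with hW
  set A := W.filter (fun i => σ (i + h) < σ i) with hA
  set B := W.filter (fun i => σ (i + ((n:ℤ) - h)) < σ i) with hB
  set φ : ℤ → ℤ := fun i => (i + h - 1) % m + 1 with hφ
  obtain ⟨j₀, hj1, hj2⟩ := exists_good hm hmn hinj hper hstab h hh1 hh2
  set js := (j₀ - 1) % m + 1 with hjs
  have hjs_mem : js ∈ W := red_mem hm j₀
  have hjs_dvd : (m : ℤ) ∣ js - j₀ := by
    obtain ⟨k, hk⟩ := red_dvd (m := m) j₀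
    exact ⟨-k, by rw [mul_neg, ← hk]; ring⟩
  have hφ_dvd : ∀ i : ℤ, (m : ℤ) ∣ (i + h) - φ i := fun i => red_dvd (i + h)
  have hφ_mem : ∀ i : ℤ, φ i ∈ W := fun i => red_mem hm (i + h)
  -- A transfers along φ
  have hinjOn : Set.InjOn φ A := by
    intro i hi i' hi' he
    have d1 := hφ_dvd i
    have d2 := hφ_dvd i'
    rw [he] at d1
    have : (m : ℤ) ∣ i - i' := by
      obtain ⟨k1, hk1⟩ := d1
      obtain ⟨k2, hk2⟩ := d2
      exact ⟨k1 - k2, by rw [mul_sub, ← hk1, ← hk2]; ring⟩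
    exact mem_Icc_eq_of_dvd hm (Finset.mem_of_mem_filter _ hi)
      (Finset.mem_of_mem_filter _ hi') this
  set Φ := A.image φ with hΦ
  have hΦcard : Φ.card = A.card := Finset.card_image_of_injOn hinjOn
  have hΦW : Φ ⊆ W := by
    intro y hy
    obtain ⟨i, _, rfl⟩ := Finset.mem_image.mp hy
    exact hφ_mem i
  have hBW : B ⊆ W := Finset.filter_subset _ _
  -- disjointness: Φ ∩ B = ∅
  have hdisj : Disjoint Φ B := by
    rw [Finset.disjoint_left]
    intro y hyΦ hyB
    obtain ⟨i, hiA, rfl⟩ := Finset.mem_image.mp hyΦ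
    have hiA' : σ (i + h) < σ i := (Finset.mem_filter.mp hiA).2
    have hyB' : σ (φ i + ((n:ℤ) - h)) < σ (φ i) := (Finset.mem_filter.mp hyB).2
    have htr := (transfer hper ((n:ℤ) - h) (i + h) (φ i) (hφ_dvd i)).mpr hyB'
    have he : i + h + ((n:ℤ) - h) = i + (n:ℤ) := by ring
    rw [he] at htr
    exact absurd (hstab i) (not_lt.mpr (le_of_lt (lt_trans htr hiA')))
  -- js not in B
  have hjsB : js ∉ B := by
    intro hmem
    have h' : σ (js + ((n:ℤ) - h)) < σ js := (Finset.mem_filter.mp hmem).2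
    have htr := (transfer hper ((n:ℤ) - h) js j₀ hjs_dvd).mp h'
    exact absurd hj2 (not_lt.mpr (le_of_lt htr))
  -- js not in Φ
  have hjsΦ : js ∉ Φ := by
    intro hmem
    obtain ⟨i, hiA, he⟩ := Finset.mem_image.mp hmem
    have hiA' : σ (i + h) < σ i := (Finset.mem_filter.mp hiA).2
    have hd : (m : ℤ) ∣ (i + h) - j₀ := by
      have d1 := hφ_dvd i
      rw [he] at d1
      obtain ⟨k1, hk1⟩ := d1
      obtain ⟨k2, hk2⟩ := hjs_dvd
      exact ⟨k1 + k2, by rw [mul_add, ← hk1, ← hk2]; ring⟩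
    have htr := (transfer hper (-h) (i + h) j₀ hd)
    rw [show i + h + -h = i by ring, show j₀ + -h = j₀ - h by ring] at htr
    exact absurd hiA' (not_lt.mpr (le_of_lt (htr.mpr hj1)))
  -- assemble
  have hsub : insert js (Φ ∪ B) ⊆ W := by
    intro y hy
    rcases Finset.mem_insert.mp hy with rfl | hy'
    · exact hjs_mem
    · rcases Finset.mem_union.mp hy' with h' | h'
      · exact hΦW h'
      · exact hBW h'
  have hcard : (insert js (Φ ∪ B)).card = A.card + B.card + 1 := by
    rw [Finset.card_insert_of_notMem (by
      intro hmem
      rcases Finset.mem_union.mp hmem with h' | h'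
      · exact hjsΦ h'
      · exact hjsB h'),
      Finset.card_union_of_disjoint hdisj, hΦcard]
  have hWcard : W.card = m := by
    rw [hW, Int.card_Icc]
    simp
  calc A.card + B.card + 1 = (insert js (Φ ∪ B)).card := hcard.symm
    _ ≤ W.card := Finset.card_le_card hsub
    _ = m := hWcard
lemma count_eq_sum (s : Finset ℤ) (T : Finset ℤ) :
    ((s ×ˢ T).filter (fun p => σ (p.1 + p.2) < σ p.1)).card
      = ∑ i ∈ s, (T.filter (fun t => σ (i + t) < σ i)).card := by
  rw [Finset.card_filter, Finset.sum_product]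
  refine Finset.sum_congr rfl fun i _ => ?_
  rw [Finset.card_filter]

lemma g_periodic (hper : ∀ x : ℤ, σ (x + m) = σ x + m) (T : Finset ℤ)
    {x y : ℤ} (hd : (m : ℤ) ∣ x - y) :
    (T.filter (fun t => σ (x + t) < σ x)).card
      = (T.filter (fun t => σ (y + t) < σ y)).card := by
  congr 1
  apply Finset.filter_congr
  intro t _
  simpa using transfer hper t x y hd

lemma sum_transversal (hm : 0 < m) (s : Finset ℤ) (hcard : s.card = m)
    (hdist : ∀ x ∈ s, ∀ y ∈ s, x % m = y % m → x = y)
    (g : ℤ → ℕ) (hg : ∀ x y : ℤ, (m : ℤ) ∣ x - y → g x = g y) :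
    ∑ i ∈ s, g i = ∑ r ∈ Finset.Ico (0:ℤ) m, g r := by
  classical
  have hm' : (0:ℤ) < m := by exact_mod_cast hm
  have hinj : Set.InjOn (fun x : ℤ => x % m) s := by
    intro x hx y hy he
    exact hdist x hx y hy he
  have himg : s.image (fun x : ℤ => x % m) = Finset.Ico (0:ℤ) m := by
    apply Finset.eq_of_subset_of_card_le
    · intro r hr
      obtain ⟨x, _, rfl⟩ := Finset.mem_image.mp hr
      rw [Finset.mem_Ico]
      exact ⟨Int.emod_nonneg x hm'.ne', Int.emod_lt_of_pos x hm'⟩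
    · rw [Finset.card_image_of_injOn hinj, hcard, Int.card_Ico]
      simp
  have h1 : ∑ i ∈ s, g i = ∑ i ∈ s, g (i % m) := by
    refine Finset.sum_congr rfl fun i _ => ?_
    apply hg
    have := Int.mul_ediv_add_emod i (m : ℤ)
    exact ⟨i / m, by omega⟩
  rw [h1, ← himg, Finset.sum_image hinj]

lemma Icc_transversal (hm : 0 < m) :
    ∀ x ∈ Finset.Icc (1:ℤ) m, ∀ y ∈ Finset.Icc (1:ℤ) m, x % m = y % m → x = y := by
  intro x hx y hy he
  apply mem_Icc_eq_of_dvd hm hx hy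
  have : (x - y) % m = 0 := by
    rw [Int.sub_emod, he]
    simp
  exact Int.dvd_of_emod_eq_zero this

end CodinvAux

/-- For an `n`-stable affine permutation `σ` of period `m` (with
`gcd(m,n) = 1`): the number of pairs `(i,h) ∈ [1,m] × [1,n]` with
`σ(i+h) < σ(i)` is at most `(m-1)(n-1)/2`, and this count is unchanged if
`{1,…,m}` is replaced by any set of `m` integers pairwise distinct modulo
`m`. -/
theorem codinv_bound_and_invariance (m n : ℕ) (hm : 0 < m) (hn : 0 < n)
    (hmn : Nat.Coprime m n)
    (σ : ℤ → ℤ) (hbij : Function.Bijective σ)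
    (hper : ∀ x : ℤ, σ (x + m) = σ x + m)
    (hsum : 2 * (∑ x ∈ Finset.Icc (1 : ℤ) m, σ x) = m * (m + 1))
    (hstab : ∀ x : ℤ, σ x < σ (x + n)) :
    2 * ((Finset.Icc (1 : ℤ) m ×ˢ Finset.Icc (1 : ℤ) n).filter
          (fun p => σ (p.1 + p.2) < σ p.1)).card ≤ (m - 1) * (n - 1) ∧
    ∀ s : Finset ℤ, s.card = m →
      (∀ x ∈ s, ∀ y ∈ s, x % m = y % m → x = y) →
      ((s ×ˢ Finset.Icc (1 : ℤ) n).filter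
          (fun p => σ (p.1 + p.2) < σ p.1)).card
        = ((Finset.Icc (1 : ℤ) m ×ˢ Finset.Icc (1 : ℤ) n).filter
            (fun p => σ (p.1 + p.2) < σ p.1)).card := by
  classical
  have hinj := hbij.injective
  set W := Finset.Icc (1:ℤ) m with hW
  set T := Finset.Icc (1:ℤ) n with hT
  set g : ℤ → ℕ := fun i => (T.filter (fun t => σ (i + t) < σ i)).card with hg
  have hgper : ∀ x y : ℤ, (m : ℤ) ∣ x - y → g x = g y := fun x y hd =>
    CodinvAux.g_periodic hper T hd
  have hWcard : W.card = m := by rw [hW, Int.card_Icc]; simp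
  constructor
  · -- bound
    set a : ℤ → ℕ := fun t => (W.filter (fun i => σ (i + t) < σ i)).card with ha
    have hcount : ((W ×ˢ T).filter (fun p => σ (p.1 + p.2) < σ p.1)).card
        = ∑ t ∈ T, a t := by
      rw [Finset.card_filter, Finset.sum_product, Finset.sum_comm]
      refine Finset.sum_congr rfl fun t _ => ?_
      simp only [ha, Finset.card_filter]
    have han : a n = 0 := by
      rw [ha]
      simp only [Finset.card_eq_zero, Finset.filter_eq_empty_iff]
      intro i _
      exact not_lt.mpr (le_of_lt (hstab i))
    have hsplit : ∑ t ∈ T, a t = ∑ t ∈ Finset.Icc (1:ℤ) ((n:ℤ) - 1), a t := by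
      symm
      apply Finset.sum_subset
      · intro t ht
        rw [Finset.mem_Icc] at ht ⊢
        omega
      · intro t ht hnot
        rw [hT, Finset.mem_Icc] at ht
        rw [Finset.mem_Icc] at hnot
        have : t = (n : ℤ) := by omega
        rw [this, han]
    have hrefl : ∑ t ∈ Finset.Icc (1:ℤ) ((n:ℤ) - 1), a ((n:ℤ) - t)
        = ∑ t ∈ Finset.Icc (1:ℤ) ((n:ℤ) - 1), a t := by
      refine Finset.sum_nbij' (fun t => (n:ℤ) - t) (fun t => (n:ℤ) - t) ?_ ?_ ?_ ?_ ?_ <;>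
        intro t ht <;> simp only [Finset.mem_Icc] at * <;> first | rfl | omega
    have hkey : ∀ t ∈ Finset.Icc (1:ℤ) ((n:ℤ) - 1), a t + a ((n:ℤ) - t) + 1 ≤ m := by
      intro t ht
      rw [Finset.mem_Icc] at ht
      exact CodinvAux.key hm hmn hinj hper hstab t ht.1 (by omega)
    have hcard1 : (Finset.Icc (1:ℤ) ((n:ℤ) - 1)).card = n - 1 := by
      rw [Int.card_Icc]
      omega
    calc 2 * ((W ×ˢ T).filter (fun p => σ (p.1 + p.2) < σ p.1)).card
        = ∑ t ∈ Finset.Icc (1:ℤ) ((n:ℤ) - 1), (a t + a ((n:ℤ) - t)) := by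
          rw [hcount, hsplit, Finset.sum_add_distrib, hrefl, two_mul]
      _ ≤ ∑ _t ∈ Finset.Icc (1:ℤ) ((n:ℤ) - 1), (m - 1) := by
          apply Finset.sum_le_sum
          intro t ht
          have := hkey t ht
          omega
      _ = (n - 1) * (m - 1) := by
          rw [Finset.sum_const, hcard1, smul_eq_mul]
      _ = (m - 1) * (n - 1) := mul_comm _ _
  · -- invariance
    intro s hcard hdist
    rw [CodinvAux.count_eq_sum s T, CodinvAux.count_eq_sum W T]
    have h1 := CodinvAux.sum_transversal hm s hcard hdist g hgper
    have h2 := CodinvAux.sum_transversal hm W hWcard (CodinvAux.Icc_transversal hm) g hgper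
    rw [hg] at h1 h2
    rw [h1, h2]
end
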